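/- arXiv:2208.04912 — 3 statements merged into one kernel-verified Lean document; each statement's English description precedes it below -/
import Mathlib

section
/- Let X, Y, Z be locally convex Hausdorff topological vector spaces, let A : X → Y and B : X → Z be continuous linear maps, let S ⊆ Y and T ⊆ Z be non-empty closed convex cones, and let φ ∈ X*. Then the following are equivalent: (1) for all x ∈ X, if A(x) ∈ S and B(x) ∈ T then φ(x) ≥ 0; (2) φ lies in the weak-* closure of { A*(μ) + B*(ν) : μ ∈ S⁺, ν ∈ T⁺ }. -/
/-!
The cone `K = {A*μ + B*ν : μ ∈ S⁺, ν ∈ T⁺}` is a convex cone in the weak-* dual `X*`, which is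
locally convex and whose continuous functionals are exactly the evaluations at points of `X`.
Separating a point from the closed cone `closure K` therefore yields: `φ ∈ closure K` iff
`φ x ≥ 0` for every `x` with `χ x ≥ 0` for all `χ ∈ K`. Testing `K` against `μ ∘ A` and `ν ∘ B`
alone, and using the same separation argument in `Y` and `Z` (a closed convex cone is the set of
points on which its nonnegative functionals are nonnegative), the latter condition on `x` is
exactly `A x ∈ S ∧ B x ∈ T`.
-/

section ClosedCone

variable {E : Type*} [AddCommGroup E] [Module ℝ E] [TopologicalSpace E] [ContinuousSMul ℝ E]

theorem exists_properCone_coe_eq {S : Set E} (hne : S.Nonempty) (hcl : IsClosed S)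
    (hconv : Convex ℝ S) (hcone : ∀ y ∈ S, ∀ l : ℝ, 0 < l → l • y ∈ S) :
    ∃ C : ProperCone ℝ E, (C : Set E) = S := by
  let K : ConvexCone ℝ E :=
    { carrier := S
      smul_mem' := fun c hc x hx => hcone x hx c hc
      add_mem' := fun x hx y hy => by
        -- `x + y = 2 • (2⁻¹ • x + 2⁻¹ • y)`
        have hmid := hconv hx hy (by norm_num : (0 : ℝ) ≤ 2⁻¹) (by norm_num : (0 : ℝ) ≤ 2⁻¹)
          (by norm_num)
        simpa [smul_add, smul_smul] using hcone _ hmid 2 two_pos }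
  lift K to ProperCone ℝ E using ⟨hne, hcl⟩ with C hC
  exact ⟨C, congrArg SetLike.coe hC⟩

variable [IsTopologicalAddGroup E] [LocallyConvexSpace ℝ E]

theorem ProperCone.mem_iff_forall_dual_nonneg (C : ProperCone ℝ E) {y : E} :
    y ∈ C ↔ ∀ f : StrongDual ℝ E, (∀ c ∈ C, 0 ≤ f c) → 0 ≤ f y := by
  refine ⟨fun hy f hf => hf y hy, fun h => ?_⟩
  by_contra hy
  obtain ⟨f, hfC, hfy⟩ := C.hyperplane_separation_point hy
  exact (h f hfC).not_gt hfy

theorem mem_of_forall_dual_nonneg {S : Set E} (hne : S.Nonempty) (hcl : IsClosed S)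
    (hconv : Convex ℝ S) (hcone : ∀ y ∈ S, ∀ l : ℝ, 0 < l → l • y ∈ S) {y : E}
    (h : ∀ f : StrongDual ℝ E, (∀ s ∈ S, 0 ≤ f s) → 0 ≤ f y) : y ∈ S := by
  obtain ⟨C, rfl⟩ := exists_properCone_coe_eq hne hcl hconv hcone
  exact C.mem_iff_forall_dual_nonneg.2 h

end ClosedCone

namespace WeakDual

variable {X : Type*} [AddCommGroup X] [Module ℝ X] [TopologicalSpace X]

theorem exists_eq_eval (f : StrongDual ℝ (WeakDual ℝ X)) :
    ∃ x : X, ∀ χ : WeakDual ℝ X, f χ = χ x := by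
  obtain ⟨x, rfl⟩ := LinearMap.dualEmbedding_surjective (topDualPairing ℝ X) f
  exact ⟨x, fun _ => rfl⟩

theorem mem_closure_iff_forall_nonneg (K : PointedCone ℝ (WeakDual ℝ X)) {φ : WeakDual ℝ X} :
    φ ∈ closure (K : Set (WeakDual ℝ X)) ↔ ∀ x : X, (∀ χ ∈ K, 0 ≤ χ x) → 0 ≤ φ x := by
  refine ⟨fun hφ x hx => closure_minimal hx (isClosed_le continuous_const (eval_continuous x)) hφ,
    fun h => ?_⟩
  have : LocallyConvexSpace ℝ (WeakDual ℝ X) := WeakBilin.locallyConvexSpace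
  refine (ProperCone.mem_iff_forall_dual_nonneg ⟨K.closure, isClosed_closure⟩).2 fun f hf => ?_
  obtain ⟨x, hx⟩ := exists_eq_eval f
  simp only [hx] at hf ⊢
  exact h x fun χ hχ => hf χ (subset_closure hχ)

end WeakDual

section PullbackDualCone

variable {X Y Z : Type*} [AddCommGroup X] [Module ℝ X] [TopologicalSpace X]
  [AddCommGroup Y] [Module ℝ Y] [TopologicalSpace Y]
  [AddCommGroup Z] [Module ℝ Z] [TopologicalSpace Z]

def pullbackDualCone (A : X →L[ℝ] Y) (B : X →L[ℝ] Z) (S : Set Y) (T : Set Z) :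
    PointedCone ℝ (WeakDual ℝ X) where
  carrier := {χ | ∃ (μ : WeakDual ℝ Y) (ν : WeakDual ℝ Z),
    (∀ y ∈ S, 0 ≤ μ y) ∧ (∀ z ∈ T, 0 ≤ ν z) ∧ ∀ x : X, χ x = μ (A x) + ν (B x)}
  zero_mem' := ⟨0, 0, fun _ _ => le_rfl, fun _ _ => le_rfl, fun _ => (add_zero 0).symm⟩
  add_mem' := by
    rintro χ₁ χ₂ ⟨μ₁, ν₁, hμ₁, hν₁, h₁⟩ ⟨μ₂, ν₂, hμ₂, hν₂, h₂⟩
    refine ⟨μ₁ + μ₂, ν₁ + ν₂, fun y hy => add_nonneg (hμ₁ y hy) (hμ₂ y hy),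
      fun z hz => add_nonneg (hν₁ z hz) (hν₂ z hz), fun x => ?_⟩
    change χ₁ x + χ₂ x = (μ₁ (A x) + μ₂ (A x)) + (ν₁ (B x) + ν₂ (B x))
    rw [h₁, h₂]
    ring
  smul_mem' := by
    rintro c χ ⟨μ, ν, hμ, hν, h⟩
    refine ⟨c • μ, c • ν, fun y hy => mul_nonneg c.2 (hμ y hy),
      fun z hz => mul_nonneg c.2 (hν z hz), fun x => ?_⟩
    change (c : ℝ) * χ x = c * μ (A x) + c * ν (B x)
    rw [h, mul_add]

variable [IsTopologicalAddGroup Y] [ContinuousSMul ℝ Y] [LocallyConvexSpace ℝ Y]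
  [IsTopologicalAddGroup Z] [ContinuousSMul ℝ Z] [LocallyConvexSpace ℝ Z]

theorem forall_mem_pullbackDualCone_nonneg_iff (A : X →L[ℝ] Y) (B : X →L[ℝ] Z)
    {S : Set Y} (hSne : S.Nonempty) (hScl : IsClosed S) (hSconv : Convex ℝ S)
    (hScone : ∀ y ∈ S, ∀ l : ℝ, 0 < l → l • y ∈ S)
    {T : Set Z} (hTne : T.Nonempty) (hTcl : IsClosed T) (hTconv : Convex ℝ T)
    (hTcone : ∀ z ∈ T, ∀ l : ℝ, 0 < l → l • z ∈ T) (x : X) :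
    (∀ χ ∈ pullbackDualCone A B S T, 0 ≤ χ x) ↔ A x ∈ S ∧ B x ∈ T := by
  constructor
  · intro h
    refine ⟨mem_of_forall_dual_nonneg hSne hScl hSconv hScone fun μ hμ => ?_,
      mem_of_forall_dual_nonneg hTne hTcl hTconv hTcone fun ν hν => ?_⟩
    · exact h (μ.comp A) ⟨μ, 0, hμ, fun _ _ => le_rfl, fun _ => (add_zero _).symm⟩
    · exact h (ν.comp B) ⟨0, ν, fun _ _ => le_rfl, hν, fun _ => (zero_add _).symm⟩
  · rintro ⟨hAx, hBx⟩ χ ⟨μ, ν, hμ, hν, hχ⟩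
    rw [hχ]
    exact add_nonneg (hμ _ hAx) (hν _ hBx)

end PullbackDualCone

theorem farkas_locally_convex_two_constraints_general
    (X Y Z : Type*)
    [AddCommGroup X] [Module ℝ X] [TopologicalSpace X]
    [AddCommGroup Y] [Module ℝ Y] [TopologicalSpace Y] [IsTopologicalAddGroup Y]
    [ContinuousSMul ℝ Y] [LocallyConvexSpace ℝ Y]
    [AddCommGroup Z] [Module ℝ Z] [TopologicalSpace Z] [IsTopologicalAddGroup Z]
    [ContinuousSMul ℝ Z] [LocallyConvexSpace ℝ Z]
    (A : X →L[ℝ] Y) (B : X →L[ℝ] Z)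
    (S : Set Y) (hSne : S.Nonempty) (hScl : IsClosed S) (hSconv : Convex ℝ S)
    (hScone : ∀ y ∈ S, ∀ l : ℝ, 0 < l → l • y ∈ S)
    (T : Set Z) (hTne : T.Nonempty) (hTcl : IsClosed T) (hTconv : Convex ℝ T)
    (hTcone : ∀ z ∈ T, ∀ l : ℝ, 0 < l → l • z ∈ T)
    (φ : WeakDual ℝ X) :
    (∀ x : X, A x ∈ S → B x ∈ T → 0 ≤ φ x) ↔
      φ ∈ closure {χ : WeakDual ℝ X |
        ∃ (μ : WeakDual ℝ Y) (ν : WeakDual ℝ Z),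
          (∀ y ∈ S, 0 ≤ μ y) ∧ (∀ z ∈ T, 0 ≤ ν z) ∧
          ∀ x : X, χ x = μ (A x) + ν (B x)} := by
  change _ ↔ φ ∈ closure (pullbackDualCone A B S T : Set (WeakDual ℝ X))
  simp only [WeakDual.mem_closure_iff_forall_nonneg, forall_mem_pullbackDualCone_nonneg_iff A B
    hSne hScl hSconv hScone hTne hTcl hTconv hTcone, and_imp]

/-- Two-constraint Farkas' lemma in locally convex spaces. -/
theorem farkas_locally_convex_two_constraints
    (X Y Z : Type*)
    [AddCommGroup X] [Module ℝ X] [TopologicalSpace X] [IsTopologicalAddGroup X]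
    [ContinuousSMul ℝ X] [LocallyConvexSpace ℝ X] [T2Space X]
    [AddCommGroup Y] [Module ℝ Y] [TopologicalSpace Y] [IsTopologicalAddGroup Y]
    [ContinuousSMul ℝ Y] [LocallyConvexSpace ℝ Y] [T2Space Y]
    [AddCommGroup Z] [Module ℝ Z] [TopologicalSpace Z] [IsTopologicalAddGroup Z]
    [ContinuousSMul ℝ Z] [LocallyConvexSpace ℝ Z] [T2Space Z]
    (A : X →L[ℝ] Y) (B : X →L[ℝ] Z)
    (S : Set Y) (hSne : S.Nonempty) (hScl : IsClosed S) (hSconv : Convex ℝ S)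
    (hScone : ∀ y ∈ S, ∀ l : ℝ, 0 < l → l • y ∈ S)
    (T : Set Z) (hTne : T.Nonempty) (hTcl : IsClosed T) (hTconv : Convex ℝ T)
    (hTcone : ∀ z ∈ T, ∀ l : ℝ, 0 < l → l • z ∈ T)
    (φ : WeakDual ℝ X) :
    (∀ x : X, A x ∈ S → B x ∈ T → 0 ≤ φ x) ↔
      φ ∈ closure {χ : WeakDual ℝ X |
        ∃ (μ : WeakDual ℝ Y) (ν : WeakDual ℝ Z),
          (∀ y ∈ S, 0 ≤ μ y) ∧ (∀ z ∈ T, 0 ≤ ν z) ∧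
          ∀ x : X, χ x = μ (A x) + ν (B x)} :=
  farkas_locally_convex_two_constraints_general X Y Z A B S hSne hScl hSconv hScone T hTne hTcl
    hTconv hTcone φ
end

section
/- Let D be a set, Γ a set of real-valued cost functions over D, and ρ : D^r → ℝ. If ρ ∈ ℓExpr(Γ), then every weighted polymorphism of Γ weight-improves ρ; that is, ℓExpr(Γ) ⊆ Imp(wPol(Γ)). -/
open Finsupp

/-- A cost function of arity `r` over the domain `D`. -/
abbrev CostFn (D : Type*) (r : ℕ) := (Fin r → D) → ℝ

/-- A (finite-)valued language: a set of cost functions of arbitrary arities. -/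
abbrev Lang (D : Type*) := Set (Σ r : ℕ, CostFn D r)

/-- The set of `k`-ary operations on `D`. -/
abbrev Op (D : Type*) (k : ℕ) := (Fin k → D) → D

/-- `f` is a `k`-ary projection. -/
def IsProj {D : Type*} {k : ℕ} (f : Op D k) : Prop := ∃ i : Fin k, f = fun x => x i

/-- `M_k(Γ)`: pairs `(γ, S)` with `γ ∈ Γ` and `S` a matrix over `D` with `ar(γ)` rows
and `k` columns. -/
def MkIdx (D : Type*) (Γ : Lang D) (k : ℕ) :=
  Σ g : {g : Σ r : ℕ, CostFn D r // g ∈ Γ}, Fin g.1.1 → Fin k → D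

/-- `Σ_{(S,γ)} λ(S,γ) · γ(f(S))`, where `f` is applied to `S` row-wise. -/
noncomputable def lamSum {D : Type*} {Γ : Lang D} {k : ℕ}
    (lam : MkIdx D Γ k →₀ ℝ) (f : Op D k) : ℝ :=
  lam.sum fun p w => w * p.1.1.2 fun j => f (p.2 j)

/-- `ρ` belongs to the local expressive power of `Γ`. -/
def LExpr {D : Type*} (Γ : Lang D) {r : ℕ} (ρ : CostFn D r) : Prop :=
  ∀ ε : ℝ, 0 < ε → ∀ (k : ℕ) (x : Fin k → Fin r → D) (F : Finset (Op D k)),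
    ∃ (lam : MkIdx D Γ k →₀ ℝ) (c : ℝ),
      (∀ p, 0 ≤ lam p) ∧
      (∀ i : Fin k, |ρ (x i) - (lamSum lam (fun v => v i) + c)| ≤ ε) ∧
      (∀ f ∈ F, ρ (fun j => f fun i => x i j) ≤ lamSum lam f + c + ε)

/-- A `k`-ary weighting: finitely supported, total weight `0`, nonnegative on
non-projections. -/
def IsWeighting {D : Type*} {k : ℕ} (ω : Op D k →₀ ℝ) : Prop :=
  (ω.sum fun _ w => w) = 0 ∧ ∀ f : Op D k, ¬ IsProj f → 0 ≤ ω f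

/-- `ω` weight-improves the cost function `ρ`. -/
def Improves {D : Type*} {k r : ℕ} (ω : Op D k →₀ ℝ) (ρ : CostFn D r) : Prop :=
  ∀ x : Fin k → Fin r → D,
    (ω.sum fun f w => w * ρ fun j => f fun i => x i j) ≤ 0

/-- The weighted polymorphisms of `Γ`. -/
def wPol {D : Type*} (Γ : Lang D) : Set (Σ k : ℕ, Op D k →₀ ℝ) :=
  {ω | IsWeighting ω.2 ∧ ∀ γ ∈ Γ, Improves ω.2 γ.2}

/-- `ρ` is weight-improved by every weighting in `Ω`. -/
def Imp {D : Type*} (Ω : Set (Σ k : ℕ, Op D k →₀ ℝ)) {r : ℕ} (ρ : CostFn D r) : Prop :=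
  ∀ ω ∈ Ω, Improves ω.2 ρ

/-- `σ` is an affine conical combination over `Γ`. -/
def AffConic {D : Type*} (Γ : Lang D) {n : ℕ} (σ : CostFn D n) : Prop :=
  ∃ (m : ℕ) (γ : Fin m → {g : Σ r : ℕ, CostFn D r // g ∈ Γ})
    (s : ∀ j : Fin m, Fin (γ j).1.1 → Fin n) (lam : Fin m → ℚ) (c : ℚ),
    (∀ j, 0 ≤ lam j) ∧
    ∀ x : Fin n → D, σ x = (∑ j, (lam j : ℝ) * (γ j).1.2 fun i => x (s j i)) + (c : ℝ)

/-- `ρ` is expressible in `Γ` (i.e. `ρ ∈ ⟨Γ⟩`). -/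
def Expressible {D : Type*} (Γ : Lang D) {r : ℕ} (ρ : CostFn D r) : Prop :=
  ∃ (n : ℕ) (w : Fin r → Fin n) (σ : CostFn D n), AffConic Γ σ ∧
    ∀ x : Fin r → D,
      ρ x = ⨅ h : {h : Fin n → D // ∀ i, h (w i) = x i}, σ h.1

/- Fix a weighted polymorphism `ω` and a tuple `x`. For `ε > 0`, local
expressibility gives a nonnegative combination `Σ λ(S,γ) γ + c` that is `ε`-close to `ρ` at the
columns `x i` and `ε`-above it at `f(x)` for every `f` in the support of `ω`. Since only
projections carry negative weight, `Σ_f ω(f) ρ(f(x))` is at most `Σ_f ω(f) (Σ λ γ(f(S)) + c)`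
up to an error `ε Σ_f |ω(f)|`. The constant drops out because `Σ_f ω(f) = 0`, and the remaining
double sum is `≤ 0` since `ω` improves each `γ ∈ Γ`. Letting `ε → 0` gives the claim. -/

lemma nonpos_of_forall_le_mul {a C : ℝ} (h : ∀ ε > 0, a ≤ ε * C) : a ≤ 0 := by
  refine le_of_forall_pos_le_add fun δ hδ => ?_
  have hε : 0 < δ / (|C| + 1) := by positivity
  calc a ≤ δ / (|C| + 1) * C := h _ hε
    _ ≤ δ / (|C| + 1) * (|C| + 1) := by gcongr; linarith [le_abs_self C]
    _ = 0 + δ := by field_simp; ring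

lemma mul_le_mul_add_abs_mul {a u v ε : ℝ} (hpos : 0 ≤ a → u ≤ v + ε)
    (hneg : a < 0 → v - ε ≤ u) : a * u ≤ a * v + |a| * ε := by
  rcases le_or_gt 0 a with ha | ha
  · rw [abs_of_nonneg ha]
    nlinarith [hpos ha]
  · rw [abs_of_neg ha]
    nlinarith [hneg ha]

section Weighting

variable {D : Type*} {k : ℕ}

lemma IsWeighting.isProj_of_neg {ω : Op D k →₀ ℝ} (hω : IsWeighting ω) {f : Op D k}
    (hf : ω f < 0) : IsProj f := by
  by_contra h
  exact hf.not_ge (hω.2 f h)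

lemma IsWeighting.sum_mul_add_const {ω : Op D k →₀ ℝ} (hω : IsWeighting ω) (g : Op D k → ℝ)
    (c : ℝ) : (ω.sum fun f w => w * (g f + c)) = ω.sum fun f w => w * g f := by
  simp only [mul_add, Finsupp.sum_add, ← Finsupp.sum_mul, hω.1, zero_mul, add_zero]

lemma sum_mul_lamSum_nonpos {Γ : Lang D} {ω : Op D k →₀ ℝ} (hΓ : ∀ γ ∈ Γ, Improves ω γ.2)
    {lam : MkIdx D Γ k →₀ ℝ} (hlam : ∀ p, 0 ≤ lam p) :
    (ω.sum fun f w => w * lamSum lam f) ≤ 0 := by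
  have hswap : (ω.sum fun f w => w * lamSum lam f) =
      lam.sum fun p μ => μ * ω.sum fun f w => w * p.1.1.2 fun j => f (p.2 j) := by
    simp only [lamSum, Finsupp.mul_sum]
    rw [Finsupp.sum_comm]
    refine Finsupp.sum_congr fun p _ => congrArg ω.sum ?_
    funext f w
    ring
  rw [hswap]
  exact Finset.sum_nonpos fun p _ =>
    mul_nonpos_of_nonneg_of_nonpos (hlam p) (hΓ p.1.1 p.1.2 fun i j => p.2 j i)

end Weighting

/-- `ℓExpr(Γ) ⊆ Imp(wPol(Γ))`: every weighted polymorphism of `Γ` weight-improves every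
cost function in the local expressive power of `Γ`. -/
theorem lExpr_subset_imp_wPol (D : Type*) (Γ : Lang D) (r : ℕ)
    (ρ : CostFn D r) (hρ : LExpr Γ ρ) :
    Imp (wPol Γ) ρ := by
  rintro ⟨k, ω⟩ ⟨hω, hΓ⟩ x
  refine nonpos_of_forall_le_mul (C := ω.sum fun _ w => |w|) fun ε hε => ?_
  obtain ⟨lam, c, hlam, hproj, hsupp⟩ := hρ ε hε k x ω.support
  have hterm : ∀ f ∈ ω.support, ω f * ρ (fun j => f fun i => x i j) ≤
      ω f * (lamSum lam f + c) + |ω f| * ε := fun f hf =>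
    mul_le_mul_add_abs_mul (fun _ => hsupp f hf) fun hneg => by
      obtain ⟨i, rfl⟩ := hω.isProj_of_neg hneg
      linarith [(abs_le.mp (hproj i)).1]
  calc (ω.sum fun f w => w * ρ fun j => f fun i => x i j)
      ≤ ω.sum fun f w => w * (lamSum lam f + c) + |w| * ε := Finset.sum_le_sum hterm
    _ = (ω.sum fun f w => w * lamSum lam f) + ε * ω.sum fun _ w => |w| := by
      rw [Finsupp.sum_add, hω.sum_mul_add_const, Finsupp.mul_sum]
      simp only [mul_comm ε]
    _ ≤ ε * ω.sum fun _ w => |w| := by linarith [sum_mul_lamSum_nonpos hΓ hlam]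
end

section
/- Let D be a set, Γ a set of real-valued cost functions over D, and ρ : D^r → ℝ. If ρ is weight-improved by every weighted polymorphism of Γ, then ρ belongs to the local expressive power of Γ; that is, Imp(wPol(Γ)) ⊆ ℓExpr(Γ). -/
open Finsupp

/-! Fix `k`, the columns `x` and a finite set `s` of `k`-ary operations containing `F` and all
projections. The ε-approximation asks for the vector `u = (ρ(f(x)))_{f ∈ s}` to be ε-close to
a vector lying below some `f ↦ Σ λ(S,γ) γ(f(S)) + c` with equality at the projections; such
vectors form a convex cone, so it suffices that `u` lies in its closure. Otherwise Farkas' lemma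
gives a linear functional that is nonpositive on the cone and positive at `u`. Its coefficients
form a weighting: the constants `±1` lie in the cone, forcing total weight zero, and so do the
vectors `-e_f` for non-projections `f`, forcing nonnegative weight there. Since every cost
vector `(γ(f(S)))_f` lies in the cone, the weighting improves every `γ ∈ Γ`, yet it does not
improve `ρ`. -/

section Weights

variable {α R : Type*} [DecidableEq α] [CommSemiring R] (s : Finset α)

noncomputable def weightsOfDual (φ : (s → R) →ₗ[R] R) : α →₀ R :=
  (Finsupp.equivFunOnFinite.symm fun i : s => φ (Pi.single i 1)).embDomain
    (Function.Embedding.subtype _)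

variable {s}

theorem weightsOfDual_apply (φ : (s → R) →ₗ[R] R) {a : α} (ha : a ∈ s) :
    weightsOfDual s φ a = φ (Pi.single ⟨a, ha⟩ 1) :=
  Finsupp.embDomain_apply_self (Function.Embedding.subtype _) _ ⟨a, ha⟩

theorem weightsOfDual_of_notMem (φ : (s → R) →ₗ[R] R) {a : α} (ha : a ∉ s) :
    weightsOfDual s φ a = 0 :=
  Finsupp.embDomain_of_notMem_range _ _ _ (by simpa using ha)

theorem sum_weightsOfDual_mul (φ : (s → R) →ₗ[R] R) (V : α → R) :
    ((weightsOfDual s φ).sum fun a w => w * V a) = φ fun i => V i := by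
  rw [weightsOfDual, Finsupp.sum_embDomain, Finsupp.sum_fintype _ _ fun _ => zero_mul _]
  conv_rhs => rw [← Finset.univ_sum_single fun i : s => V i, map_sum]
  refine Finset.sum_congr rfl fun i _ => ?_
  have hsingle : Pi.single i (V i) = V i • (Pi.single i 1 : s → R) := by
    rw [← Pi.single_smul', smul_eq_mul, mul_one]
  rw [hsingle, map_smul, smul_eq_mul, mul_comm]
  rfl

end Weights

section DominatedCone

variable {D : Type*} {Γ : Lang D} {k : ℕ}

lemma lamSum_zero (f : Op D k) : lamSum (0 : MkIdx D Γ k →₀ ℝ) f = 0 :=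
  Finsupp.sum_zero_index

lemma lamSum_add (l₁ l₂ : MkIdx D Γ k →₀ ℝ) (f : Op D k) :
    lamSum (l₁ + l₂) f = lamSum l₁ f + lamSum l₂ f :=
  Finsupp.sum_add_index' (fun _ => zero_mul _) fun _ _ _ => add_mul _ _ _

lemma lamSum_smul (t : ℝ) (lam : MkIdx D Γ k →₀ ℝ) (f : Op D k) :
    lamSum (t • lam) f = t * lamSum lam f := by
  rw [lamSum, lamSum, Finsupp.sum_smul_index fun _ => zero_mul _, Finsupp.mul_sum]
  exact Finsupp.sum_congr fun _ _ => mul_assoc _ _ _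

lemma lamSum_single (p : MkIdx D Γ k) (w : ℝ) (f : Op D k) :
    lamSum (Finsupp.single p w) f = w * p.1.1.2 fun j => f (p.2 j) :=
  Finsupp.sum_single_index (zero_mul _)

variable (Γ) in
def dominatedCone (s : Finset (Op D k)) : PointedCone ℝ (s → ℝ) :=
  .ofConeComb
    {z | ∃ (lam : MkIdx D Γ k →₀ ℝ) (c : ℝ), (∀ p, 0 ≤ lam p) ∧
      (∀ f : s, z f ≤ lamSum lam f + c) ∧ ∀ f : s, IsProj f.1 → z f = lamSum lam f + c}
    ⟨0, 0, 0, fun _ => le_rfl, fun f => by simp [lamSum_zero],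
      fun f _ => by simp [lamSum_zero]⟩
    (by
      rintro z₁ ⟨l₁, c₁, hl₁, hle₁, heq₁⟩ z₂ ⟨l₂, c₂, hl₂, hle₂, heq₂⟩ a ha b hb
      have hcomb : ∀ f, lamSum (a • l₁ + b • l₂) f + (a * c₁ + b * c₂) =
          a * (lamSum l₁ f + c₁) + b * (lamSum l₂ f + c₂) := fun f => by
        rw [lamSum_add, lamSum_smul, lamSum_smul]; ring
      refine ⟨a • l₁ + b • l₂, a * c₁ + b * c₂, fun p => ?_, fun f => ?_, fun f hf => ?_⟩
      · exact add_nonneg (mul_nonneg ha (hl₁ p)) (mul_nonneg hb (hl₂ p))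
      · rw [hcomb]
        exact add_le_add (mul_le_mul_of_nonneg_left (hle₁ f) ha)
          (mul_le_mul_of_nonneg_left (hle₂ f) hb)
      · rw [hcomb, ← heq₁ f hf, ← heq₂ f hf]
        rfl)

variable {s : Finset (Op D k)}

lemma const_mem_dominatedCone (c : ℝ) : (fun _ => c) ∈ dominatedCone Γ s :=
  ⟨0, c, fun _ => le_rfl, fun f => by simp [lamSum_zero], fun f _ => by simp [lamSum_zero]⟩

lemma neg_single_mem_dominatedCone [DecidableEq (Op D k)] {g : s} (hg : ¬ IsProj g.1) :
    -Pi.single g 1 ∈ dominatedCone Γ s := by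
  refine ⟨0, 0, fun _ => le_rfl, fun f => ?_, fun f hf => ?_⟩
  · rw [lamSum_zero, add_zero, Pi.neg_apply, neg_nonpos]
    exact (Pi.single_nonneg (α := fun _ : s => ℝ)).2 zero_le_one f
  · have hfg : f ≠ g := by rintro rfl; exact hg hf
    simp [hfg, lamSum_zero]

lemma cost_mem_dominatedCone {γ : Σ r : ℕ, CostFn D r} (hγ : γ ∈ Γ)
    (y : Fin k → Fin γ.1 → D) :
    (fun f : s => γ.2 fun j => f.1 fun i => y i j) ∈ dominatedCone Γ s := by
  let p : MkIdx D Γ k := ⟨⟨γ, hγ⟩, fun j i => y i j⟩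
  have hval : ∀ f : Op D k, lamSum (Finsupp.single p 1) f + 0 = γ.2 fun j => f fun i => y i j :=
    fun f => by rw [lamSum_single, one_mul, add_zero]
  exact ⟨Finsupp.single p 1, 0, fun q => Finsupp.single_nonneg.2 zero_le_one q,
    fun f => (hval f).ge, fun f _ => (hval f).symm⟩

end DominatedCone

section Separation

variable {D : Type*} {Γ : Lang D} {k : ℕ} {s : Finset (Op D k)}

theorem mem_wPol_weightsOfDual [DecidableEq (Op D k)] (φ : (s → ℝ) →ₗ[ℝ] ℝ)
    (hφ : ∀ z ∈ dominatedCone Γ s, φ z ≤ 0) :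
    (⟨k, weightsOfDual s φ⟩ : Σ k : ℕ, Op D k →₀ ℝ) ∈ wPol Γ := by
  have hφ_const : φ (fun _ => 1) = 0 := by
    have hneg : φ (fun _ => -1) = -φ (fun _ => 1) := by
      rw [← map_neg]; rfl
    linarith [hφ _ (const_mem_dominatedCone 1), hφ _ (const_mem_dominatedCone (-1))]
  refine ⟨⟨?_, fun f hf => ?_⟩, fun γ hγ y => ?_⟩
  · simpa [hφ_const] using sum_weightsOfDual_mul φ fun _ => 1
  · by_cases hfs : f ∈ s
    · rw [weightsOfDual_apply φ hfs]
      simpa using hφ _ (neg_single_mem_dominatedCone (g := ⟨f, hfs⟩) hf)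
    · rw [weightsOfDual_of_notMem φ hfs]
  · show ((weightsOfDual s φ).sum fun f w => w * γ.2 fun j => f fun i => y i j) ≤ 0
    rw [sum_weightsOfDual_mul]
    exact hφ _ (cost_mem_dominatedCone hγ y)

theorem mem_closure_dominatedCone {r : ℕ} {ρ : CostFn D r} (hρ : Imp (wPol Γ) ρ)
    (x : Fin k → Fin r → D) (s : Finset (Op D k)) :
    (fun f : s => ρ fun j => f.1 fun i => x i j) ∈ closure (dominatedCone Γ s : Set (s → ℝ)) := by
  classical
  by_contra hx
  obtain ⟨f, hfC, hfx⟩ := ProperCone.hyperplane_separation_point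
    (Submodule.closure (dominatedCone Γ s)) hx
  have hweights := hρ _ (mem_wPol_weightsOfDual (-f : StrongDual ℝ (s → ℝ)).toLinearMap
    fun z hz => neg_nonpos.2 (hfC z (subset_closure hz))) x
  rw [sum_weightsOfDual_mul] at hweights
  exact (neg_nonpos.1 hweights).not_gt hfx

end Separation

theorem exists_lamSum_approx_of_mem_closure {D : Type*} {Γ : Lang D} {k r : ℕ}
    {ρ : CostFn D r} {x : Fin k → Fin r → D} {s F : Finset (Op D k)}
    (hproj : ∀ i : Fin k, (fun v => v i) ∈ s) (hF : F ⊆ s)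
    (hρ : (fun f : s => ρ fun j => f.1 fun i => x i j) ∈
      closure (dominatedCone Γ s : Set (s → ℝ)))
    {ε : ℝ} (hε : 0 < ε) :
    ∃ (lam : MkIdx D Γ k →₀ ℝ) (c : ℝ), (∀ p, 0 ≤ lam p) ∧
      (∀ i : Fin k, |ρ (x i) - (lamSum lam (fun v => v i) + c)| ≤ ε) ∧
      (∀ f ∈ F, ρ (fun j => f fun i => x i j) ≤ lamSum lam f + c + ε) := by
  obtain ⟨z, ⟨lam, c, hlam, hle, heq⟩, hdist⟩ := Metric.mem_closure_iff.1 hρ ε hε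
  have hcoord : ∀ f : s, |(ρ fun j => f.1 fun i => x i j) - z f| ≤ ε := fun f =>
    (dist_le_pi_dist _ z f).trans hdist.le
  refine ⟨lam, c, hlam, fun i => ?_, fun f hf => ?_⟩
  · rw [← heq ⟨_, hproj i⟩ ⟨i, rfl⟩]
    exact hcoord ⟨_, hproj i⟩
  · linarith [(abs_le.1 (hcoord ⟨f, hF hf⟩)).2, hle ⟨f, hF hf⟩]

/-- `Imp(wPol(Γ)) ⊆ ℓExpr(Γ)`: if `ρ` is weight-improved by every weighted polymorphism
of `Γ`, then `ρ` belongs to the local expressive power of `Γ`. -/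
theorem imp_wPol_subset_lExpr (D : Type*) (Γ : Lang D) (r : ℕ)
    (ρ : CostFn D r) (hρ : Imp (wPol Γ) ρ) :
    LExpr Γ ρ := by
  classical
  intro ε hε k x F
  let s := F ∪ Finset.univ.image fun i : Fin k => (fun v => v i : Op D k)
  exact exists_lamSum_approx_of_mem_closure
    (fun i => Finset.mem_union_right _ (Finset.mem_image_of_mem _ (Finset.mem_univ i)))
    Finset.subset_union_left (mem_closure_dominatedCone hρ x s) hε
end
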